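/- arXiv:2503.22457 — 4 statements merged into one kernel-verified Lean document; each statement's English description precedes it below -/
import Mathlib

section
/- Let 𝒢₀ = (G₀, m, φ, τ) be a Γ-gain framework. If the RUM spectrum Ω(𝒢₀) is an infinite set, then the space of bounded infinitesimal flexes of 𝒢₀ (i.e. the kernel of C̃(𝒢₀) in ℓ∞(Γ, X^{V₀})) is infinite dimensional. -/
/-- A character of the discrete abelian group `Γ`. -/
def IsChar {Γ : Type*} [AddCommGroup Γ] (χ : Γ → ℂ) : Prop :=
  (∀ γ γ' : Γ, χ (γ + γ') = χ γ * χ γ') ∧ ∀ γ : Γ, ‖χ γ‖ = 1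

/-- The orbit matrix `O_{𝒢₀}(χ)` of a `Γ`-gain framework. -/
def orbitMatrix {Γ X Y V₀ E₀ : Type*} [AddCommGroup Γ]
    [NormedAddCommGroup X] [InnerProductSpace ℂ X]
    [NormedAddCommGroup Y] [Module ℂ Y]
    (s r : E₀ → V₀) (m : E₀ → Γ) (φ : E₀ → (X →ₗ[ℂ] Y)) (U : Γ → (X ≃ₗᵢ[ℂ] X))
    (χ : Γ → ℂ) (x : V₀ → X) (e : E₀) : Y :=
  φ e (x (s e)) - χ (m e) • φ e (U (m e) (x (r e)))

/-- The RUM spectrum `Ω(𝒢₀)`. -/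
def RUMspectrum {Γ X Y V₀ E₀ : Type*} [AddCommGroup Γ]
    [NormedAddCommGroup X] [InnerProductSpace ℂ X]
    [NormedAddCommGroup Y] [Module ℂ Y]
    (s r : E₀ → V₀) (m : E₀ → Γ) (φ : E₀ → (X →ₗ[ℂ] Y)) (U : Γ → (X ≃ₗᵢ[ℂ] X)) :
    Set (Γ → ℂ) :=
  {χ : Γ → ℂ | IsChar χ ∧ ∃ x : V₀ → X, x ≠ 0 ∧ ∀ e, orbitMatrix s r m φ U χ x e = 0}

/-- The gain framework operator `C̃(𝒢₀)`. -/
def gainOp {Γ X Y V₀ E₀ : Type*} [AddCommGroup Γ]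
    [NormedAddCommGroup X] [InnerProductSpace ℂ X]
    [NormedAddCommGroup Y] [Module ℂ Y]
    (s r : E₀ → V₀) (m : E₀ → Γ) (φ : E₀ → (X →ₗ[ℂ] Y)) (U : Γ → (X ≃ₗᵢ[ℂ] X))
    (f : Γ → V₀ → X) (γ : Γ) (e : E₀) : Y :=
  φ e (U (-γ) (f γ (s e) - f (γ + m e) (r e)))

/-!
Each `χ ∈ Ω(𝒢₀)` with a kernel vector `x` of `O_{𝒢₀}(χ)` yields the bounded flex
`γ ↦ dτ(γ) (χ(γ) x)`: the factor `dτ(-γ)` in `C̃(𝒢₀)` undoes the twist, and what remains is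
`χ(γ) · O_{𝒢₀}(χ) x = 0`. Undoing the twists pointwise, flexes coming from distinct characters
become `γ ↦ χ(γ) x_χ`, which are linearly independent because distinct characters are (Artin).
-/

open Function

section Characters

variable {Γ : Type*} [AddCommGroup Γ]

theorem IsChar.map_zero {χ : Γ → ℂ} (hχ : IsChar χ) : χ 0 = 1 := by
  have hne : χ 0 ≠ 0 := fun h => by simpa [h] using hχ.2 0
  have h := hχ.1 0 0
  rw [add_zero] at h
  exact (mul_eq_left₀ hne).mp h.symm

def IsChar.toMonoidHom {χ : Γ → ℂ} (hχ : IsChar χ) : Multiplicative Γ →* ℂ where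
  toFun g := χ g.toAdd
  map_one' := hχ.map_zero
  map_mul' _ _ := hχ.1 _ _

theorem linearIndependent_of_isChar {ι : Type*} {χ : ι → Γ → ℂ} (hχ : ∀ i, IsChar (χ i))
    (hinj : Injective χ) : LinearIndependent ℂ χ := by
  have hinj' : Injective fun i => (hχ i).toMonoidHom :=
    fun i j h => hinj (funext fun γ => DFunLike.congr_fun h (Multiplicative.ofAdd γ))
  exact (linearIndependent_monoidHom (Multiplicative Γ) ℂ).comp _ hinj'

end Characters

theorem LinearIndependent.smul_const_right {K Γ W ι : Type*} [Field K] [AddCommGroup W]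
    [Module K W] {f : ι → Γ → K} (hf : LinearIndependent K f) {x : ι → W} (hx : ∀ i, x i ≠ 0) :
    LinearIndependent K fun i γ => f i γ • x i := by
  rw [linearIndependent_iff'] at hf ⊢
  intro s g hg i hi
  obtain ⟨ℓ, hℓ⟩ : ∃ ℓ : Module.Dual K W, ℓ (x i) ≠ 0 := by
    by_contra! h
    exact hx i ((Module.forall_dual_apply_eq_zero_iff K (x i)).mp h)
  have hsum : ∑ j ∈ s, (g j * ℓ (x j)) • f j = 0 := by
    funext γ
    have := congr_arg ℓ (congr_fun hg γ)
    simpa [Finset.sum_apply, map_sum, mul_assoc, mul_comm (f _ γ)] using this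
  exact (mul_eq_zero.mp (hf s _ hsum i hi)).resolve_right hℓ

section GainFramework

variable {Γ X Y V₀ E₀ : Type*} [AddCommGroup Γ]
  [NormedAddCommGroup X] [InnerProductSpace ℂ X] [NormedAddCommGroup Y] [Module ℂ Y]
  {U : Γ → (X ≃ₗᵢ[ℂ] X)}

theorem linearPart_map_add {τ : Γ → (X ≃ᵃⁱ[ℂ] X)}
    (hτ : ∀ γ γ' : Γ, ∀ x : X, τ (γ + γ') x = τ γ (τ γ' x))
    (hU : ∀ γ x, U γ x = τ γ x - τ γ 0) (γ γ' : Γ) (x : X) :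
    U (γ + γ') x = U γ (U γ' x) := by
  have hlin : ∀ γ y, U γ y = (τ γ).linearIsometryEquiv y := fun γ y => by
    simpa [← hU] using ((τ γ).map_vsub y 0).symm
  rw [hU, hτ, hτ, hlin γ, hU, ← vsub_eq_sub, ← vsub_eq_sub, (τ γ).map_vsub]

theorem apply_neg_apply (hact : ∀ γ γ' x, U (γ + γ') x = U γ (U γ' x)) (γ : Γ) (x : X) :
    U (-γ) (U γ x) = x := by
  have hU0 : ∀ y, U 0 y = y := fun y => (U 0).injective (by rw [← hact, add_zero])
  rw [← hact, neg_add_cancel, hU0]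

def blochFlex (U : Γ → (X ≃ₗᵢ[ℂ] X)) (χ : Γ → ℂ) (x : V₀ → X) : Γ → V₀ → X :=
  fun γ v => U γ (χ γ • x v)

theorem norm_blochFlex_le [Fintype V₀] {χ : Γ → ℂ} (hχ : IsChar χ) (x : V₀ → X) (γ : Γ)
    (v : V₀) : ‖blochFlex U χ x γ v‖ ≤ ∑ w, ‖x w‖ := by
  rw [blochFlex, LinearIsometryEquiv.norm_map, norm_smul, hχ.2, one_mul]
  exact Finset.single_le_sum (fun w _ => norm_nonneg (x w)) (Finset.mem_univ v)

theorem gainOp_blochFlex (hact : ∀ γ γ' x, U (γ + γ') x = U γ (U γ' x)) (s r : E₀ → V₀)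
    (m : E₀ → Γ) (φ : E₀ → (X →ₗ[ℂ] Y)) {χ : Γ → ℂ} (hχ : IsChar χ) (x : V₀ → X) (γ : Γ)
    (e : E₀) :
    gainOp s r m φ U (blochFlex U χ x) γ e = χ γ • orbitMatrix s r m φ U χ x e := by
  rw [gainOp, orbitMatrix, blochFlex, blochFlex, hact γ (m e), hχ.1, mul_smul, map_smul (U (m e)),
    ← map_sub, ← smul_sub, apply_neg_apply hact, map_smul (U (m e)), map_smul, map_sub, map_smul]

def untwist (U : Γ → (X ≃ₗᵢ[ℂ] X)) : (Γ → V₀ → X) ≃ₗ[ℂ] (Γ → V₀ → X) :=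
  LinearEquiv.piCongrRight fun γ => LinearEquiv.piCongrRight fun _ => (U γ).toLinearEquiv

theorem linearIndependent_blochFlex {ι : Type*} {χ : ι → Γ → ℂ} (hχ : ∀ i, IsChar (χ i))
    (hinj : Injective χ) {x : ι → V₀ → X} (hx : ∀ i, x i ≠ 0) :
    LinearIndependent ℂ fun i => blochFlex U (χ i) (x i) :=
  ((linearIndependent_of_isChar hχ hinj).smul_const_right hx).map' (untwist U).toLinearMap
    (untwist U).ker

end GainFramework

theorem infinite_RUMspectrum_infinite_dimensional_flex_space_general
    {Γ : Type*} [AddCommGroup Γ]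
    {X : Type*} [NormedAddCommGroup X] [InnerProductSpace ℂ X]
    {Y : Type*} [NormedAddCommGroup Y] [InnerProductSpace ℂ Y]
    {V₀ E₀ : Type*} [Fintype V₀]
    (s r : E₀ → V₀) (m : E₀ → Γ) (φ : E₀ → (X →ₗ[ℂ] Y))
    (τ : Γ → (X ≃ᵃⁱ[ℂ] X))
    (hτ : ∀ γ γ' : Γ, ∀ x : X, τ (γ + γ') x = τ γ (τ γ' x))
    (U : Γ → (X ≃ₗᵢ[ℂ] X)) (hU : ∀ γ x, U γ x = τ γ x - τ γ 0)
    (hinf : (RUMspectrum s r m φ U).Infinite) :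
    ∀ n : ℕ, ∃ u : Fin n → Γ → V₀ → X,
      (∀ k, (∃ M : ℝ, ∀ (γ : Γ) (v : V₀), ‖u k γ v‖ ≤ M) ∧
        ∀ (γ : Γ) (e : E₀), gainOp s r m φ U (u k) γ e = 0) ∧
      LinearIndependent ℂ u := by
  intro n
  have hUadd := linearPart_map_add hτ hU
  let χ : Fin n ↪ RUMspectrum s r m φ U := Fin.valEmbedding.trans (hinf.natEmbedding _)
  have hχ (k : Fin n) : IsChar (χ k).1 := (χ k).2.1
  choose x hx0 hx using fun k => (χ k).2.2
  refine ⟨fun k => blochFlex U (χ k).1 (x k), fun k => ⟨⟨_, norm_blochFlex_le (hχ k) _⟩, ?_⟩,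
    linearIndependent_blochFlex hχ (Subtype.val_injective.comp χ.injective) hx0⟩
  intro γ e
  rw [gainOp_blochFlex hUadd s r m φ (hχ k), hx k e, smul_zero]

/-- if the RUM spectrum `Ω(𝒢₀)` is infinite, then the space of bounded
infinitesimal flexes of `𝒢₀` (the kernel of `C̃(𝒢₀)` in `ℓ∞(Γ, X^{V₀})`) is infinite
dimensional: for every `n` there are `n` linearly independent bounded infinitesimal
flexes. -/
theorem infinite_RUMspectrum_infinite_dimensional_flex_space
    {Γ : Type*} [AddCommGroup Γ] [AddGroup.FG Γ]
    {X : Type*} [NormedAddCommGroup X] [InnerProductSpace ℂ X] [FiniteDimensional ℂ X]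
    {Y : Type*} [NormedAddCommGroup Y] [InnerProductSpace ℂ Y] [FiniteDimensional ℂ Y]
    {V₀ E₀ : Type*} [Fintype V₀] [Fintype E₀]
    (s r : E₀ → V₀) (m : E₀ → Γ) (φ : E₀ → (X →ₗ[ℂ] Y))
    (τ : Γ → (X ≃ᵃⁱ[ℂ] X))
    (hτ : ∀ γ γ' : Γ, ∀ x : X, τ (γ + γ') x = τ γ (τ γ' x))
    (U : Γ → (X ≃ₗᵢ[ℂ] X)) (hU : ∀ γ x, U γ x = τ γ x - τ γ 0)
    (hinf : (RUMspectrum s r m φ U).Infinite) :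
    ∀ n : ℕ, ∃ u : Fin n → Γ → V₀ → X,
      (∀ k, (∃ M : ℝ, ∀ (γ : Γ) (v : V₀), ‖u k γ v‖ ≤ M) ∧
        ∀ (γ : Γ) (e : E₀), gainOp s r m φ U (u k) γ e = 0) ∧
      LinearIndependent ℂ u :=
  infinite_RUMspectrum_infinite_dimensional_flex_space_general s r m φ τ hτ U hU hinf
end

section
/- Let 𝒢₀ = (G₀, m, φ, τ) be a Γ-gain framework with V₀ nonempty and X nonzero. Then the linear span of the joint spectral χ-symmetric vectors for 𝒢₀ equals the translation space Z_{𝒢₀}, i.e. the space of all f ∈ ℓ∞(Γ, X^{V₀}) for which there exists a ∈ X with f(γ) = (a,…,a) for all γ ∈ Γ. -/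
/-- The `χ`-symmetric vector `z(χ, a) = T_τ̃ (χ⊗a)`,
 i.e. `z(χ,a)(γ)_v = χ(γ) dτ(γ) a_v`. -/
def chiSymVec {Γ X V₀ : Type*} [AddCommGroup Γ]
    [NormedAddCommGroup X] [InnerProductSpace ℂ X]
    (U : Γ → (X ≃ₗᵢ[ℂ] X)) (χ : Γ → ℂ) (a : V₀ → X) : Γ → V₀ → X :=
  fun γ v => U γ (χ γ • a v)

/-- The set of joint spectral `χ`-symmetric vectors for a gain framework with respect
to a generating tuple `γs`: vectors of the form `z(conj χ_λ, (a,…,a))` where `λ ∈ σ(T)`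
is a joint eigenvalue of `T = (dτ(γs 1), …, dτ(γs n))` with joint eigenvector `a` and
`χ_λ` is the associated character (`dτ(γ) a = χ_λ(γ) • a` for all `γ`). -/
def jointSpectralVectors {Γ X V₀ : Type*} [AddCommGroup Γ]
    [NormedAddCommGroup X] [InnerProductSpace ℂ X]
    (U : Γ → (X ≃ₗᵢ[ℂ] X)) {n : ℕ} (γs : Fin n → Γ) : Set (Γ → V₀ → X) :=
  {f | ∃ (lam : Fin n → ℂ) (a : X) (χlam : Γ → ℂ),
    a ≠ 0 ∧ (∀ j, U (γs j) a = lam j • a) ∧ IsChar χlam ∧ (∀ γ, U γ a = χlam γ • a) ∧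
    f = chiSymVec U (fun γ => (starRingEnd ℂ) (χlam γ)) (fun _ : V₀ => a)}

/-! Since `γ ↦ U γ` is a homomorphism from the abelian group `Γ`, the unitaries `U γ` commute, and
being semisimple they are simultaneously diagonalizable: `X` is spanned by joint eigenvectors. For a
joint eigenvector `a ≠ 0` the eigenvalues `χ γ` form a unimodular character, and
`z(conj χ, (a,…,a))(γ) = conj (χ γ) • U γ a = |χ γ|² • a = a`. So every joint spectral vector is a
translation, and every translation `(a,…,a)` is a sum of such vectors. -/

open Module End

namespace Module.End

variable {K V ι : Type*} [Field K] [IsAlgClosed K] [AddCommGroup V] [Module K V]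
  [FiniteDimensional K V]

theorem iSup_iInf_eigenspace_eq_top_of_commute {f : ι → End K V}
    (hf : ∀ i, (f i).IsSemisimple) (hcomm : Pairwise fun i j ↦ Commute (f i) (f j)) :
    ⨆ χ : ι → K, ⨅ i, (f i).eigenspace (χ i) = ⊤ := by
  have hmax : ∀ i μ, (f i).maxGenEigenspace μ = (f i).eigenspace μ :=
    fun i μ ↦ (hf i).isFinitelySemisimple.maxGenEigenspace_eq_eigenspace μ
  simpa only [hmax] using
    iSup_iInf_maxGenEigenspace_eq_top_of_iSup_maxGenEigenspace_eq_top_of_commute f hcomm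
      fun i ↦ iSup_maxGenEigenspace_eq_top (f i)

end Module.End

theorem LinearEquiv.mem_invtSubmodule_symm {K V : Type*} [DivisionRing K] [AddCommGroup V]
    [Module K V] [FiniteDimensional K V] {e : V ≃ₗ[K] V} {p : Submodule K V}
    (hp : p ∈ invtSubmodule (e : V →ₗ[K] V)) : p ∈ invtSubmodule (e.symm : V →ₗ[K] V) := by
  have hmap : p.map (e : V →ₗ[K] V) = p :=
    Submodule.eq_of_le_of_finrank_eq ((mem_invtSubmodule_iff_map_le _).1 hp) (e.finrank_map_eq p)
  exact mem_invtSubmodule_symm_iff_le_map.2 hmap.ge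

namespace LinearIsometryEquiv

variable {𝕜 E : Type*} [RCLike 𝕜] [NormedAddCommGroup E] [InnerProductSpace 𝕜 E]
  [FiniteDimensional 𝕜 E]

theorem orthogonal_mem_invtSubmodule {e : E ≃ₗᵢ[𝕜] E} {p : Submodule 𝕜 E}
    (hp : p ∈ invtSubmodule (e : E →ₗ[𝕜] E)) : pᗮ ∈ invtSubmodule (e : E →ₗ[𝕜] E) := by
  intro x hx y hy
  have hy' : e.symm y ∈ p := LinearEquiv.mem_invtSubmodule_symm (e := e.toLinearEquiv) hp hy
  calc inner 𝕜 y (e x) = inner 𝕜 (e.symm y) (e.symm (e x)) := (e.symm.inner_map_map _ _).symm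
    _ = 0 := by rw [symm_apply_apply]; exact hx _ hy'

theorem isSemisimple (e : E ≃ₗᵢ[𝕜] E) : Module.End.IsSemisimple (e : E →ₗ[𝕜] E) :=
  isSemisimple_iff.2 fun p hp ↦
    ⟨pᗮ, orthogonal_mem_invtSubmodule hp, Submodule.isCompl_orthogonal p⟩

end LinearIsometryEquiv

section GainFramework

variable {Γ X V₀ : Type*} [AddCommGroup Γ] [NormedAddCommGroup X] [InnerProductSpace ℂ X]
  {U : Γ → X ≃ₗᵢ[ℂ] X}

theorem linearPart_add_apply {τ : Γ → X ≃ᵃⁱ[ℂ] X}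
    (hτ : ∀ γ γ' : Γ, ∀ x : X, τ (γ + γ') x = τ γ (τ γ' x))
    (hU : ∀ γ x, U γ x = τ γ x - τ γ 0) (γ γ' : Γ) (x : X) :
    U (γ + γ') x = U γ (U γ' x) := by
  have hτsub : ∀ u w, τ γ u - τ γ w = U γ u - U γ w := by
    intro u w
    rw [hU, hU]
    abel
  rw [hU, hτ, hτ, hτsub, ← map_sub, ← hU]

theorem pairwise_commute_of_add_apply (hmul : ∀ γ γ' x, U (γ + γ') x = U γ (U γ' x)) :
    Pairwise fun γ γ' ↦ Commute (U γ : End ℂ X) (U γ') :=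
  fun γ γ' _ ↦ LinearMap.ext fun x ↦ by
    change U γ (U γ' x) = U γ' (U γ x)
    rw [← hmul, ← hmul, add_comm]

theorem isChar_of_apply_eq_smul (hmul : ∀ γ γ' x, U (γ + γ') x = U γ (U γ' x)) {a : X}
    (ha : a ≠ 0) {χ : Γ → ℂ} (hχ : ∀ γ, U γ a = χ γ • a) : IsChar χ := by
  refine ⟨fun γ γ' ↦ smul_left_injective ℂ ha ?_, fun γ ↦ ?_⟩
  · change χ (γ + γ') • a = (χ γ * χ γ') • a
    rw [← hχ, hmul, hχ γ', map_smul, hχ γ, smul_smul, mul_comm]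
  · have hnorm := congrArg norm (hχ γ)
    rw [(U γ).norm_map, norm_smul] at hnorm
    exact (mul_eq_right₀ (norm_ne_zero_iff.2 ha)).1 hnorm.symm

theorem chiSymVec_conj_eq_const {χ : Γ → ℂ} (hχ : ∀ γ, ‖χ γ‖ = 1) {a : X}
    (ha : ∀ γ, U γ a = χ γ • a) :
    chiSymVec U (fun γ ↦ starRingEnd ℂ (χ γ)) (fun _ : V₀ ↦ a) = fun _ _ ↦ a := by
  funext γ v
  have hconj : starRingEnd ℂ (χ γ) * χ γ = 1 := by
    rw [Complex.conj_mul', hχ γ]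
    norm_num
  simp only [chiSymVec, map_smul, ha γ, smul_smul, hconj, one_smul]

theorem const_mem_jointSpectralVectors (hmul : ∀ γ γ' x, U (γ + γ') x = U γ (U γ' x))
    {n : ℕ} (γs : Fin n → Γ) {a : X} (ha : a ≠ 0) {χ : Γ → ℂ} (hχ : ∀ γ, U γ a = χ γ • a) :
    (fun _ _ ↦ a : Γ → V₀ → X) ∈ jointSpectralVectors U γs := by
  have hchar := isChar_of_apply_eq_smul hmul ha hχ
  exact ⟨fun j ↦ χ (γs j), a, χ, ha, fun j ↦ hχ (γs j), hchar, hχ,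
    (chiSymVec_conj_eq_const hchar.2 hχ).symm⟩

end GainFramework

theorem span_jointSpectralVectors_eq_translationSpace_general
    {Γ : Type*} [AddCommGroup Γ]
    {X : Type*} [NormedAddCommGroup X] [InnerProductSpace ℂ X] [FiniteDimensional ℂ X]
    {V₀ : Type*}
    (τ : Γ → (X ≃ᵃⁱ[ℂ] X))
    (hτ : ∀ γ γ' : Γ, ∀ x : X, τ (γ + γ') x = τ γ (τ γ' x))
    (U : Γ → (X ≃ₗᵢ[ℂ] X)) (hU : ∀ γ x, U γ x = τ γ x - τ γ 0)
    {n : ℕ} (γs : Fin n → Γ) :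
    (Submodule.span ℂ (jointSpectralVectors U γs (V₀ := V₀)) : Set (Γ → V₀ → X)) =
      {f : Γ → V₀ → X | ∃ a : X, ∀ (γ : Γ) (v : V₀), f γ v = a} := by
  have hmul := linearPart_add_apply hτ hU
  let const : X →ₗ[ℂ] Γ → V₀ → X := LinearMap.pi fun _ ↦ LinearMap.pi fun _ ↦ LinearMap.id
  have hconst : {f : Γ → V₀ → X | ∃ a : X, ∀ γ v, f γ v = a} = LinearMap.range const := by
    ext f
    simp [const, funext_iff, eq_comm]
  rw [hconst, SetLike.coe_set_eq]
  refine le_antisymm (Submodule.span_le.2 ?_) ?_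
  · rintro _ ⟨-, a, χ, -, -, hχ, ha, rfl⟩
    exact ⟨a, (chiSymVec_conj_eq_const hχ.2 ha).symm⟩
  · rintro _ ⟨a, rfl⟩
    have hjoint := iSup_iInf_eigenspace_eq_top_of_commute (fun γ ↦ (U γ).isSemisimple)
      (pairwise_commute_of_add_apply hmul)
    refine (iSup_le fun χ ↦ ?_ : _ ≤ (Submodule.span ℂ _).comap const)
      (hjoint ▸ Submodule.mem_top : a ∈ _)
    intro b hb
    rcases eq_or_ne b 0 with rfl | hb0
    · simp
    · exact Submodule.subset_span <| const_mem_jointSpectralVectors hmul γs hb0 fun γ ↦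
        mem_eigenspace_iff.1 ((Submodule.mem_iInf _).1 hb γ)

/-- the linear span of the joint spectral `χ`-symmetric vectors of a
`Γ`-gain framework equals the translation space `Z_{𝒢₀}`, the space of all
`f ∈ ℓ∞(Γ, X^{V₀})` that are constant with value a constant tuple `(a, …, a)`. -/
theorem span_jointSpectralVectors_eq_translationSpace
    {Γ : Type*} [AddCommGroup Γ] [AddGroup.FG Γ]
    {X : Type*} [NormedAddCommGroup X] [InnerProductSpace ℂ X] [FiniteDimensional ℂ X]
    [Nontrivial X]
    {Y : Type*} [NormedAddCommGroup Y] [InnerProductSpace ℂ Y] [FiniteDimensional ℂ Y]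
    {V₀ E₀ : Type*} [Fintype V₀] [Fintype E₀] [Nonempty V₀]
    (s r : E₀ → V₀) (m : E₀ → Γ) (φ : E₀ → (X →ₗ[ℂ] Y))
    (τ : Γ → (X ≃ᵃⁱ[ℂ] X))
    (hτ : ∀ γ γ' : Γ, ∀ x : X, τ (γ + γ') x = τ γ (τ γ' x))
    (U : Γ → (X ≃ₗᵢ[ℂ] X)) (hU : ∀ γ x, U γ x = τ γ x - τ γ 0)
    {n : ℕ} (γs : Fin n → Γ)
    (hgen : ∀ γ : Γ, U γ ∈ Subgroup.closure (Set.range fun j => U (γs j))) :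
    (Submodule.span ℂ (jointSpectralVectors U γs (V₀ := V₀)) : Set (Γ → V₀ → X)) =
      {f : Γ → V₀ → X | ∃ a : X, ∀ (γ : Γ) (v : V₀), f γ v = a} :=
  span_jointSpectralVectors_eq_translationSpace_general τ hτ U hU γs
end

section
/- Let Γ be a countable discrete abelian group, X a finite-dimensional complex Hilbert space, h ∈ AP(Γ, X), χ ∈ Γ̂, and let (H_n) be a Bohr–Bochner sequence for Γ. Then the Fourier coefficient ĥ(χ) = lim_n (1/|H_n|) Σ_{γ∈H_n} conj(χ(γ))·h(γ) exists, and the sequence of functions U_X(χ, H_n)h converges uniformly on Γ to χ⊗ĥ(χ), where (χ⊗b)(γ) = χ(γ)·b. -/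
open Filter

/-- An `X`-valued trigonometric polynomial on `Γ`. -/
def IsTrigPoly {Γ X : Type*} [AddCommGroup Γ] [NormedAddCommGroup X] [Module ℂ X]
    (p : Γ → X) : Prop :=
  ∃ (n : ℕ) (χ : Fin n → Γ → ℂ) (a : Fin n → X),
    (∀ k, IsChar (χ k)) ∧ ∀ γ, p γ = ∑ k, χ k γ • a k

/-- An almost periodic `X`-valued function on `Γ`. -/
def IsAP {Γ X : Type*} [AddCommGroup Γ] [NormedAddCommGroup X] [Module ℂ X]
    (h : Γ → X) : Prop :=
  ∀ ε : ℝ, 0 < ε → ∃ p : Γ → X, IsTrigPoly p ∧ ∀ γ, ‖h γ - p γ‖ < ε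

/-- A Bohr–Bochner sequence for `Γ`. -/
def IsBohrBochner {Γ : Type*} [AddCommGroup Γ] [DecidableEq Γ] (H : ℕ → Finset Γ) : Prop :=
  Monotone H ∧ (∀ γ : Γ, ∃ n, γ ∈ H n) ∧
    ∀ γ : Γ, Tendsto
      (fun n => (((H n).filter fun x => γ + x ∉ H n).card : ℝ) / ((H n).card : ℝ))
      atTop (nhds 0)

/-!
For a character `ψ`, the means `|Hₙ|⁻¹ Σ_{γ ∈ Hₙ} ψ γ` tend to `1` if `ψ` is trivial and to `0`
otherwise: translating `Hₙ` by `γ₀` multiplies the sum by `ψ γ₀` and changes it by at most twice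
the number of points pushed out of `Hₙ`, which is `o(|Hₙ|)`. This settles `h = ψ • a`, hence by
linearity every trigonometric polynomial. Both the Fourier means and `U_X(χ, H)` are contractions
for the sup norm, so the statement passes to uniform limits of trigonometric polynomials, the
limit `ĥ(χ)` existing by completeness of `X`.
-/

open Finset
open scoped Topology

section Average

variable {ι E : Type*}

noncomputable def avg [AddCommGroup E] [Module ℂ E] (s : Finset ι) (f : ι → E) : E :=
  ((#s : ℂ))⁻¹ • ∑ i ∈ s, f i

section Module

variable [AddCommGroup E] [Module ℂ E] (s : Finset ι)

lemma avg_add (f g : ι → E) : avg s (fun i => f i + g i) = avg s f + avg s g := by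
  simp only [avg, sum_add_distrib, smul_add]

lemma avg_sub (f g : ι → E) : avg s (fun i => f i - g i) = avg s f - avg s g := by
  simp only [avg, sum_sub_distrib, smul_sub]

lemma avg_smul_const (c : ι → ℂ) (a : E) : avg s (fun i => c i • a) = avg s c • a := by
  simp only [avg, ← sum_smul, smul_eq_mul, mul_smul]

lemma smul_avg (c : ℂ) (f : ι → E) : c • avg s f = avg s (fun i => c • f i) := by
  simp only [avg, smul_sum, smul_comm c]

lemma avg_const {s : Finset ι} (hs : s.Nonempty) (a : E) : avg s (fun _ => a) = a := by
  simp [avg, sum_const, ← Nat.cast_smul_eq_nsmul ℂ, smul_smul, hs.card_ne_zero]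

end Module

variable [SeminormedAddCommGroup E] [NormedSpace ℂ E] {s : Finset ι}

lemma norm_avg_le {f : ι → E} {C : ℝ} (hC : 0 ≤ C) (hf : ∀ i ∈ s, ‖f i‖ ≤ C) :
    ‖avg s f‖ ≤ C := by
  rcases s.eq_empty_or_nonempty with rfl | hs
  · simpa [avg] using hC
  have hcard : (0 : ℝ) < #s := by exact_mod_cast hs.card_pos
  calc ‖avg s f‖ = (#s : ℝ)⁻¹ * ‖∑ i ∈ s, f i‖ := by simp [avg, norm_smul]
    _ ≤ (#s : ℝ)⁻¹ * (#s * C) := by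
        gcongr
        simpa using norm_sum_le_of_le s hf
    _ = C := by field_simp

lemma dist_avg_smul_le {w : ι → ℂ} (hw : ∀ i, ‖w i‖ = 1) {u v : ι → E} {ε : ℝ} (hε : 0 ≤ ε)
    (huv : ∀ i, ‖u i - v i‖ ≤ ε) :
    dist (avg s fun i => w i • u i) (avg s fun i => w i • v i) ≤ ε := by
  rw [dist_eq_norm, ← avg_sub]
  refine norm_avg_le hε fun i _ => ?_
  rw [← smul_sub, norm_smul, hw, one_mul]
  exact huv i

end Average

namespace IsChar

variable {Γ : Type*} [AddCommGroup Γ] {χ ψ : Γ → ℂ}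

lemma ne_zero (hχ : IsChar χ) (γ : Γ) : χ γ ≠ 0 :=
  norm_ne_zero_iff.mp (by simp [hχ.2 γ])

lemma conj_eq_inv (hχ : IsChar χ) (γ : Γ) : starRingEnd ℂ (χ γ) = (χ γ)⁻¹ :=
  (Complex.inv_eq_conj (hχ.2 γ)).symm

lemma map_sub (hχ : IsChar χ) (a b : Γ) : χ (a - b) = χ a * starRingEnd ℂ (χ b) := by
  rw [hχ.conj_eq_inv, eq_mul_inv_iff_mul_eq₀ (hχ.ne_zero b), ← hχ.1, sub_add_cancel]

protected lemma conj (hχ : IsChar χ) : IsChar fun γ => starRingEnd ℂ (χ γ) :=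
  ⟨fun γ γ' => by simp [hχ.1], fun γ => by simp [hχ.2 γ]⟩

protected lemma mul (hχ : IsChar χ) (hψ : IsChar ψ) : IsChar fun γ => χ γ * ψ γ :=
  ⟨fun γ γ' => by simp only [hχ.1, hψ.1]; ring, fun γ => by simp [hχ.2, hψ.2]⟩

lemma conj_mul_eq_one_iff (hχ : IsChar χ) : (fun γ => starRingEnd ℂ (χ γ) * ψ γ) = 1 ↔ ψ = χ := by
  simp only [funext_iff, Pi.one_apply, hχ.conj_eq_inv, inv_mul_eq_one₀ (hχ.ne_zero _), eq_comm]

lemma mul_conj_eq_one_iff (hψ : IsChar ψ) : (fun γ => χ γ * starRingEnd ℂ (ψ γ)) = 1 ↔ χ = ψ := by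
  simp only [funext_iff, Pi.one_apply, hψ.conj_eq_inv, mul_inv_eq_one₀ (hψ.ne_zero _)]

end IsChar

section Folner

variable {Γ : Type*} [AddCommGroup Γ] [DecidableEq Γ]

lemma norm_sum_add_left_sub_sum_le {E : Type*} [SeminormedAddCommGroup E] (K : Finset Γ)
    (γ₀ : Γ) {f : Γ → E} {C : ℝ} (hf : ∀ γ, ‖f γ‖ ≤ C) :
    ‖∑ x ∈ K, f (γ₀ + x) - ∑ x ∈ K, f x‖ ≤ 2 * #(K.filter fun x => γ₀ + x ∉ K) * C := by
  set S := K.map (addLeftEmbedding γ₀)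
  have hSK : #(S \ K) = #(K.filter fun x => γ₀ + x ∉ K) := by
    have : S \ K = (K.filter fun x => γ₀ + x ∉ K).map (addLeftEmbedding γ₀) := by
      ext y
      simp only [S, Finset.mem_sdiff, Finset.mem_map, mem_filter, addLeftEmbedding_apply]
      aesop
    rw [this, card_map]
  have hKS : #(K \ S) = #(S \ K) := card_sdiff_comm (card_map _).symm
  have hshift : ∑ x ∈ K, f (γ₀ + x) = ∑ x ∈ S, f x := (sum_map K (addLeftEmbedding γ₀) f).symm
  have hbound : ∀ T : Finset Γ, ‖∑ x ∈ T, f x‖ ≤ #T * C := fun T => by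
    simpa using norm_sum_le_of_le T fun x _ => hf x
  rw [hshift, ← sum_sdiff_sub_sum_sdiff]
  calc _ ≤ ‖∑ x ∈ S \ K, f x‖ + ‖∑ x ∈ K \ S, f x‖ := norm_sub_le _ _
    _ ≤ #(S \ K) * C + #(K \ S) * C := add_le_add (hbound _) (hbound _)
    _ = _ := by rw [hKS, hSK]; ring

lemma IsChar.norm_sub_one_mul_sum_le {ψ : Γ → ℂ} (hψ : IsChar ψ) (K : Finset Γ) (γ₀ : Γ) :
    ‖(ψ γ₀ - 1) * ∑ x ∈ K, ψ x‖ ≤ 2 * #(K.filter fun x => γ₀ + x ∉ K) := by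
  have hshift : (ψ γ₀ - 1) * ∑ x ∈ K, ψ x = ∑ x ∈ K, ψ (γ₀ + x) - ∑ x ∈ K, ψ x := by
    simp only [hψ.1, sub_mul, one_mul, mul_sum, sum_sub_distrib]
  simpa [hshift] using norm_sum_add_left_sub_sum_le K γ₀ (C := 1) fun γ => (hψ.2 γ).le

end Folner

namespace IsBohrBochner

variable {Γ : Type*} [AddCommGroup Γ] [DecidableEq Γ] {H : ℕ → Finset Γ}

lemma eventually_nonempty (hH : IsBohrBochner H) : ∀ᶠ n in atTop, (H n).Nonempty := by
  obtain ⟨n₀, hn₀⟩ := hH.2.1 0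
  exact eventually_atTop.2 ⟨n₀, fun n hn => ⟨0, hH.1 hn hn₀⟩⟩

lemma tendsto_avg_one (hH : IsBohrBochner H) :
    Tendsto (fun n => avg (H n) (1 : Γ → ℂ)) atTop (𝓝 1) :=
  tendsto_const_nhds.congr' <| hH.eventually_nonempty.mono fun _ hn => (avg_const hn 1).symm

lemma tendsto_avg_char_of_ne_one (hH : IsBohrBochner H) {ψ : Γ → ℂ} (hψ : IsChar ψ) {γ₀ : Γ}
    (hγ₀ : ψ γ₀ ≠ 1) : Tendsto (fun n => avg (H n) ψ) atTop (𝓝 0) := by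
  have hc : 0 < ‖ψ γ₀ - 1‖ := norm_pos_iff.mpr (sub_ne_zero.mpr hγ₀)
  have hbound : ∀ n, ‖avg (H n) ψ‖ ≤
      2 / ‖ψ γ₀ - 1‖ * ((#((H n).filter fun x => γ₀ + x ∉ H n) : ℝ) / #(H n)) := by
    intro n
    have := hψ.norm_sub_one_mul_sum_le (H n) γ₀
    rw [norm_mul] at this
    simp only [avg, norm_smul, norm_inv, Complex.norm_natCast]
    calc (#(H n) : ℝ)⁻¹ * ‖∑ x ∈ H n, ψ x‖
        ≤ (#(H n) : ℝ)⁻¹ * (2 * #((H n).filter fun x => γ₀ + x ∉ H n) / ‖ψ γ₀ - 1‖) := by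
          gcongr
          rwa [le_div_iff₀ hc, mul_comm]
      _ = _ := by ring
  rw [tendsto_zero_iff_norm_tendsto_zero]
  refine squeeze_zero (fun _ => norm_nonneg _) hbound ?_
  simpa using (hH.2.2 γ₀).const_mul (2 / ‖ψ γ₀ - 1‖)

open Classical in
lemma tendsto_avg_char (hH : IsBohrBochner H) {ψ : Γ → ℂ} (hψ : IsChar ψ) :
    Tendsto (fun n => avg (H n) ψ) atTop (𝓝 (if ψ = 1 then 1 else 0)) := by
  split_ifs with h
  · subst h
    exact hH.tendsto_avg_one
  · obtain ⟨γ₀, hγ₀⟩ := Function.ne_iff.mp h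
    exact hH.tendsto_avg_char_of_ne_one hψ hγ₀

end IsBohrBochner

section Approximation

lemma cauchySeq_of_forall_dist_le {α : Type*} [PseudoMetricSpace α] {u : ℕ → α}
    (h : ∀ ε > 0, ∃ v : ℕ → α, CauchySeq v ∧ ∀ n, dist (u n) (v n) ≤ ε) : CauchySeq u := by
  refine Metric.cauchySeq_iff.2 fun ε hε => ?_
  obtain ⟨v, hv, huv⟩ := h (ε / 3) (by positivity)
  obtain ⟨N, hN⟩ := Metric.cauchySeq_iff.1 hv (ε / 3) (by positivity)
  refine ⟨N, fun m hm n hn => ?_⟩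
  calc dist (u m) (u n) ≤ dist (u m) (v m) + dist (v m) (v n) + dist (v n) (u n) :=
        dist_triangle4 _ _ _ _
    _ < ε := by linarith [huv m, huv n, hN m hm n hn, dist_comm (v n) (u n)]

lemma tendstoUniformly_of_forall_dist_le {ι α β : Type*} [PseudoMetricSpace β] {p : Filter ι}
    {F : ι → α → β} {f : α → β}
    (h : ∀ ε > 0, ∃ (G : ι → α → β) (g : α → β), TendstoUniformly G g p ∧
      (∀ i x, dist (F i x) (G i x) ≤ ε) ∧ ∀ x, dist (f x) (g x) ≤ ε) :
    TendstoUniformly F f p := by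
  refine Metric.tendstoUniformly_iff.2 fun ε hε => ?_
  obtain ⟨G, g, hGg, hFG, hfg⟩ := h (ε / 3) (by positivity)
  filter_upwards [Metric.tendstoUniformly_iff.1 hGg (ε / 3) (by positivity)] with i hi x
  calc dist (f x) (F i x) ≤ dist (f x) (g x) + dist (g x) (G i x) + dist (G i x) (F i x) :=
        dist_triangle4 _ _ _ _
    _ < ε := by linarith [hfg x, hi x, hFG i x, dist_comm (G i x) (F i x)]

end Approximation

section AveragingOperators

variable {Γ X : Type*} [AddCommGroup Γ] [NormedAddCommGroup X] [NormedSpace ℂ X]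

noncomputable def fourierMean (H : Finset Γ) (χ : Γ → ℂ) (f : Γ → X) : X :=
  avg H fun γ => starRingEnd ℂ (χ γ) • f γ

/-- `U_X(χ, H) f`. -/
noncomputable def averagingOperator (H : Finset Γ) (χ : Γ → ℂ) (f : Γ → X) (γ' : Γ) : X :=
  avg H fun γ => χ γ • f (γ' - γ)

/-- `b = f̂(χ)` along `Hₙ`, and `U_X(χ, Hₙ) f → χ ⊗ b` uniformly. -/
def HasAveragingLimit (H : ℕ → Finset Γ) (χ : Γ → ℂ) (f : Γ → X) (b : X) : Prop :=
  Tendsto (fun n => fourierMean (H n) χ f) atTop (𝓝 b) ∧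
    TendstoUniformly (fun n γ' => averagingOperator (H n) χ f γ') (fun γ' => χ γ' • b) atTop

variable {H : ℕ → Finset Γ} {χ : Γ → ℂ}

lemma IsChar.dist_fourierMean_le (hχ : IsChar χ) (K : Finset Γ) {f g : Γ → X} {ε : ℝ}
    (hε : 0 ≤ ε) (hfg : ∀ γ, ‖f γ - g γ‖ ≤ ε) :
    dist (fourierMean K χ f) (fourierMean K χ g) ≤ ε :=
  dist_avg_smul_le (fun γ => by simp [hχ.2 γ]) hε hfg

lemma IsChar.dist_averagingOperator_le (hχ : IsChar χ) (K : Finset Γ) {f g : Γ → X} {ε : ℝ}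
    (hε : 0 ≤ ε) (hfg : ∀ γ, ‖f γ - g γ‖ ≤ ε) (γ' : Γ) :
    dist (averagingOperator K χ f γ') (averagingOperator K χ g γ') ≤ ε :=
  dist_avg_smul_le hχ.2 hε fun γ => hfg (γ' - γ)

lemma IsChar.tendstoUniformly_smul {ψ : Γ → ℂ} (hψ : IsChar ψ) {u : ℕ → X} {b : X}
    (hu : Tendsto u atTop (𝓝 b)) :
    TendstoUniformly (fun n γ => ψ γ • u n) (fun γ => ψ γ • b) atTop := by
  refine Metric.tendstoUniformly_iff.2 fun ε hε => ?_
  filter_upwards [Metric.tendsto_nhds.1 hu ε hε] with n hn γ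
  rwa [dist_smul₀, hψ.2, one_mul, dist_comm]

lemma hasAveragingLimit_zero : HasAveragingLimit H χ (0 : Γ → X) 0 := by
  simp only [HasAveragingLimit, fourierMean, averagingOperator, avg, Pi.zero_apply, smul_zero,
    sum_const_zero]
  exact ⟨tendsto_const_nhds, tendsto_const_nhds.tendstoUniformly_const⟩

lemma HasAveragingLimit.add {f g : Γ → X} {b c : X} (hf : HasAveragingLimit H χ f b)
    (hg : HasAveragingLimit H χ g c) : HasAveragingLimit H χ (f + g) (b + c) := by
  simp only [HasAveragingLimit, fourierMean, averagingOperator, Pi.add_apply, smul_add,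
    avg_add] at hf hg ⊢
  exact ⟨hf.1.add hg.1, hf.2.add hg.2⟩

lemma IsChar.exists_hasAveragingLimit_of_forall_approx [CompleteSpace X] (hχ : IsChar χ)
    {f : Γ → X} (h : ∀ ε > 0, ∃ g b, HasAveragingLimit H χ g b ∧ ∀ γ, ‖f γ - g γ‖ ≤ ε) :
    ∃ b, HasAveragingLimit H χ f b := by
  obtain ⟨b, hb⟩ := cauchySeq_tendsto_of_complete <| cauchySeq_of_forall_dist_le fun ε hε =>
    let ⟨_, _, hg, hfg⟩ := h ε hε
    ⟨_, hg.1.cauchySeq, fun n => hχ.dist_fourierMean_le (H n) hε.le hfg⟩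
  refine ⟨b, hb, tendstoUniformly_of_forall_dist_le fun ε hε => ?_⟩
  obtain ⟨g, c, hg, hfg⟩ := h ε hε
  refine ⟨_, _, hg.2, fun n => hχ.dist_averagingOperator_le (H n) hε.le hfg, fun γ' => ?_⟩
  rw [dist_smul₀, hχ.2, one_mul]
  exact le_of_tendsto' (hb.dist hg.1) fun n => hχ.dist_fourierMean_le (H n) hε.le hfg

variable [DecidableEq Γ]

open Classical in
lemma IsChar.hasAveragingLimit_smul {ψ : Γ → ℂ} (hψ : IsChar ψ) (hH : IsBohrBochner H)
    (hχ : IsChar χ) (a : X) :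
    HasAveragingLimit H χ (fun γ => ψ γ • a) (if ψ = χ then a else 0) := by
  have hmean : ∀ n, fourierMean (H n) χ (fun γ => ψ γ • a) =
      avg (H n) (fun γ => starRingEnd ℂ (χ γ) * ψ γ) • a := fun n => by
    simp only [fourierMean, smul_smul, avg_smul_const]
  have hop : ∀ n γ', averagingOperator (H n) χ (fun γ => ψ γ • a) γ' =
      ψ γ' • avg (H n) (fun γ => χ γ * starRingEnd ℂ (ψ γ)) • a := fun n γ' => by
    simp only [averagingOperator, hψ.map_sub, smul_smul, avg_smul_const]
    rw [← smul_eq_mul (ψ γ'), smul_avg]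
    congr 2
    funext γ
    simp only [smul_eq_mul]
    ring
  have hlim : ∀ γ', χ γ' • (if ψ = χ then a else 0) =
      ψ γ' • (if χ = ψ then (1 : ℂ) else 0) • a := fun γ' => by
    by_cases h : ψ = χ
    · subst h
      simp
    · simp [h, Ne.symm h]
  have hconj := (hH.tendsto_avg_char (hχ.conj.mul hψ)).smul_const a
  have hconj' := (hH.tendsto_avg_char (hχ.mul hψ.conj)).smul_const a
  simp only [hχ.conj_mul_eq_one_iff, hψ.mul_conj_eq_one_iff, ite_smul, one_smul,
    zero_smul] at hconj hconj'
  refine ⟨by simpa only [hmean] using hconj, ?_⟩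
  simp only [hop, hlim, ite_smul, one_smul, zero_smul]
  exact hψ.tendstoUniformly_smul hconj'

lemma IsTrigPoly.exists_hasAveragingLimit (hH : IsBohrBochner H) (hχ : IsChar χ) {p : Γ → X}
    (hp : IsTrigPoly p) : ∃ b, HasAveragingLimit H χ p b := by
  obtain ⟨m, ψ, a, hψ, hpψ⟩ := hp
  have hsum : p = ∑ k, fun γ => ψ k γ • a k := funext fun γ => by simp [hpψ γ]
  rw [hsum]
  refine sum_induction _ (fun f => ∃ b, HasAveragingLimit H χ f b)
    (fun f g ⟨b, hb⟩ ⟨c, hc⟩ => ⟨b + c, hb.add hc⟩) ⟨0, hasAveragingLimit_zero⟩ fun k _ => ?_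
  exact ⟨_, (hψ k).hasAveragingLimit_smul hH hχ (a k)⟩

end AveragingOperators

theorem averaging_operators_tendstoUniformly_general
    {Γ : Type*} [AddCommGroup Γ] [DecidableEq Γ]
    {X : Type*} [NormedAddCommGroup X] [InnerProductSpace ℂ X] [FiniteDimensional ℂ X]
    (H : ℕ → Finset Γ) (hH : IsBohrBochner H)
    (h : Γ → X) (hAP : IsAP h) (χ : Γ → ℂ) (hχ : IsChar χ) :
    ∃ b : X,
      Tendsto
        (fun n => (((H n).card : ℂ))⁻¹ • ∑ γ ∈ H n, (starRingEnd ℂ) (χ γ) • h γ)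
        atTop (nhds b) ∧
      TendstoUniformly
        (fun n γ' => (((H n).card : ℂ))⁻¹ • ∑ γ ∈ H n, χ γ • h (γ' - γ))
        (fun γ' => χ γ' • b) atTop := by
  have := FiniteDimensional.complete ℂ X
  refine hχ.exists_hasAveragingLimit_of_forall_approx fun ε hε => ?_
  obtain ⟨p, hp, hhp⟩ := hAP ε hε
  obtain ⟨b, hb⟩ := hp.exists_hasAveragingLimit hH hχ
  exact ⟨p, b, hb, fun γ => (hhp γ).le⟩

/-- for `h ∈ AP(Γ, X)`, a character `χ` and a Bohr–Bochner sequence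
`(Hₙ)`, the Fourier coefficient `ĥ(χ) = lim_n |Hₙ|⁻¹ Σ_{γ∈Hₙ} conj (χ γ) • h γ`
exists, and `U_X(χ, Hₙ)h`, where
`(U_X(χ,H)f)(γ') = |H|⁻¹ Σ_{γ∈H} χ(γ) • f(γ' − γ)`, converges uniformly on `Γ`
to `χ ⊗ ĥ(χ) : γ' ↦ χ(γ') • ĥ(χ)`. -/
theorem averaging_operators_tendstoUniformly
    {Γ : Type*} [AddCommGroup Γ] [Countable Γ] [DecidableEq Γ]
    {X : Type*} [NormedAddCommGroup X] [InnerProductSpace ℂ X] [FiniteDimensional ℂ X]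
    (H : ℕ → Finset Γ) (hH : IsBohrBochner H)
    (h : Γ → X) (hAP : IsAP h) (χ : Γ → ℂ) (hχ : IsChar χ) :
    ∃ b : X,
      Tendsto
        (fun n => (((H n).card : ℂ))⁻¹ • ∑ γ ∈ H n, (starRingEnd ℂ) (χ γ) • h γ)
        atTop (nhds b) ∧
      TendstoUniformly
        (fun n γ' => (((H n).card : ℂ))⁻¹ • ∑ γ ∈ H n, χ γ • h (γ' - γ))
        (fun γ' => χ γ' • b) atTop :=
  averaging_operators_tendstoUniformly_general H hH h hAP χ hχ
end

section
/- Let 𝒢₀ = (G₀, m, φ, τ) be a Γ-gain framework. Then the RUM spectrum satisfies Ω(𝒢₀) = ∪_{g ∈ 𝒯(𝒢₀)} Λ(T_τ̃^{-1} g), the union of the Bohr–Fourier spectra of T_τ̃^{-1}g over all twisted almost periodic flexes g of 𝒢₀. Moreover, for every h ∈ AP(Γ, X^{V₀}) with T_τ̃ h ∈ 𝒯(𝒢₀) and every χ ∈ Γ̂, the χ-symmetric vector z(χ, ĥ(χ)) = T_τ̃(χ⊗ĥ(χ)) is a bounded infinitesimal flex of 𝒢₀. -/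
open Filter

/-!
A kernel vector `x` of the orbit matrix at `χ` gives the twisted flex `γ ↦ U γ (χ γ • x)`, whose
`χ`-th Fourier coefficient is `x` itself; indeed the gain framework operator of any `χ`-symmetric
twist is `χ γ` times the orbit matrix. Conversely, the flex condition on `T_τ̃ h` says
`φ_e (h γ (s e)) = φ_e (U (m e) (h (γ + m e) (r e)))` for all `γ`. Averaging it against `conj χ`
over the Bohr–Bochner sequence, and using that such averages of a bounded function are
asymptotically invariant under translation, shows that `ĥ(χ)` lies in the kernel of the orbit
matrix at `χ`.
-/

lemma IsChar.conj_mul {Γ : Type*} [AddCommGroup Γ] {χ : Γ → ℂ} (hχ : IsChar χ) (γ : Γ) :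
    starRingEnd ℂ (χ γ) * χ γ = 1 := by
  rw [mul_comm, Complex.mul_conj, Complex.normSq_eq_norm_sq, hχ.2 γ]
  norm_num

section AlmostPeriodic

variable {Γ X : Type*} [AddCommGroup Γ] [NormedAddCommGroup X]

lemma IsTrigPoly.isAP [Module ℂ X] {p : Γ → X} (hp : IsTrigPoly p) : IsAP p :=
  fun ε hε => ⟨p, hp, fun γ => by simpa using hε⟩

lemma isTrigPoly_char_smul [Module ℂ X] {χ : Γ → ℂ} (hχ : IsChar χ) (x : X) :
    IsTrigPoly fun γ => χ γ • x :=
  ⟨1, fun _ => χ, fun _ => x, fun _ => hχ, fun γ => by simp⟩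

lemma IsAP.exists_norm_le [NormedSpace ℂ X] {h : Γ → X} (hh : IsAP h) :
    ∃ C, ∀ γ, ‖h γ‖ ≤ C := by
  obtain ⟨p, ⟨n, χ, a, hχ, hp⟩, hclose⟩ := hh 1 one_pos
  refine ⟨1 + ∑ k, ‖a k‖, fun γ => ?_⟩
  have hp_le : ‖p γ‖ ≤ ∑ k, ‖a k‖ := by
    rw [hp γ]
    exact norm_sum_le_of_le _ fun k _ => by rw [norm_smul, (hχ k).2 γ, one_mul]
  linarith [norm_le_norm_sub_add (h γ) (p γ), hclose γ]

end AlmostPeriodic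

section BohrMean

open Finset

variable {Γ : Type*}

/-- The Fourier coefficient `ĥ(χ)` is the limit of `bohrMean H (fun γ => conj (χ γ) • h γ)`. -/
noncomputable def bohrMean {E : Type*} [AddCommGroup E] [Module ℂ E] (H : ℕ → Finset Γ)
    (f : Γ → E) (n : ℕ) : E :=
  ((H n).card : ℂ)⁻¹ • ∑ γ ∈ H n, f γ

lemma map_bohrMean {E F : Type*} [AddCommGroup E] [Module ℂ E] [AddCommGroup F] [Module ℂ F]
    (L : E →ₗ[ℂ] F) (H : ℕ → Finset Γ) (f : Γ → E) (n : ℕ) :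
    L (bohrMean H f n) = bohrMean H (fun γ => L (f γ)) n := by
  simp only [bohrMean, map_smul, map_sum]

variable [AddCommGroup Γ] [DecidableEq Γ]

lemma tendsto_bohrMean_const {E : Type*} [AddCommGroup E] [Module ℂ E]
    [TopologicalSpace E] {H : ℕ → Finset Γ} (hH : IsBohrBochner H) (x : E) :
    Tendsto (bohrMean H fun _ => x) atTop (nhds x) := by
  obtain ⟨n₀, hn₀⟩ := hH.2.1 0
  refine tendsto_const_nhds.congr' ?_
  filter_upwards [eventually_ge_atTop n₀] with n hn
  have hcard : ((H n).card : ℂ) ≠ 0 := Nat.cast_ne_zero.2 (card_ne_zero_of_mem (hH.1 hn hn₀))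
  rw [bohrMean, sum_const, ← Nat.cast_smul_eq_nsmul ℂ, smul_smul, inv_mul_cancel₀ hcard, one_smul]

variable {E : Type*} [NormedAddCommGroup E]

/-- The terms indexed by `S ∩ (S - d)` on the left cancel those indexed by `S ∩ (S + d)` on the
right. -/
lemma norm_sum_add_sub_sum_le (S : Finset Γ) {f : Γ → E} {C : ℝ} (hf : ∀ γ, ‖f γ‖ ≤ C) (d : Γ) :
    ‖∑ γ ∈ S, f (d + γ) - ∑ γ ∈ S, f γ‖ ≤
      ((S.filter fun γ => d + γ ∉ S).card + (S.filter fun γ => -d + γ ∉ S).card) * C := by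
  have hinterior : ∑ γ ∈ S with d + γ ∈ S, f (d + γ) = ∑ γ ∈ S with -d + γ ∈ S, f γ :=
    sum_equiv (Equiv.addLeft d) (fun γ => by simp [and_comm]) fun _ _ => rfl
  have hboundary : ∀ (T : Finset Γ) (g : Γ → E), (∀ γ, ‖g γ‖ ≤ C) → ‖∑ γ ∈ T, g γ‖ ≤ T.card * C :=
    fun T g hg => by simpa using norm_sum_le_of_le T fun γ _ => hg γ
  rw [← sum_filter_add_sum_filter_not S (fun γ => d + γ ∈ S) (fun γ => f (d + γ)),
    ← sum_filter_add_sum_filter_not S (fun γ => -d + γ ∈ S) f, hinterior,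
    add_sub_add_left_eq_sub, add_mul]
  exact (norm_sub_le _ _).trans (add_le_add (hboundary _ _ fun γ => hf _) (hboundary _ _ hf))

variable [NormedSpace ℂ E]

lemma tendsto_bohrMean_add_sub {H : ℕ → Finset Γ} (hH : IsBohrBochner H) {f : Γ → E} {C : ℝ}
    (hf : ∀ γ, ‖f γ‖ ≤ C) (d : Γ) :
    Tendsto (fun n => bohrMean H (fun γ => f (d + γ)) n - bohrMean H f n) atTop (nhds 0) := by
  have hlim := ((hH.2.2 d).add (hH.2.2 (-d))).mul_const C
  rw [zero_add, zero_mul] at hlim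
  refine squeeze_zero_norm (fun n => ?_) hlim
  rw [bohrMean, bohrMean, ← smul_sub, norm_smul, norm_inv, Complex.norm_natCast]
  calc ((H n).card : ℝ)⁻¹ * ‖∑ γ ∈ H n, f (d + γ) - ∑ γ ∈ H n, f γ‖
      ≤ ((H n).card : ℝ)⁻¹ * ((((H n).filter fun γ => d + γ ∉ H n).card
          + ((H n).filter fun γ => -d + γ ∉ H n).card) * C) := by
        gcongr
        exact norm_sum_add_sub_sum_le _ hf d
    _ = _ := by ring

lemma tendsto_bohrMean_conj_smul_add {H : ℕ → Finset Γ} (hH : IsBohrBochner H) {χ : Γ → ℂ}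
    (hχ : IsChar χ) {h : Γ → E} {C : ℝ} (hh : ∀ γ, ‖h γ‖ ≤ C) {b : E}
    (hb : Tendsto (bohrMean H fun γ => starRingEnd ℂ (χ γ) • h γ) atTop (nhds b)) (d : Γ) :
    Tendsto (bohrMean H fun γ => starRingEnd ℂ (χ γ) • h (γ + d)) atTop (nhds (χ d • b)) := by
  set F : Γ → E := fun γ => starRingEnd ℂ (χ γ) • h γ
  have hF : ∀ γ, ‖F γ‖ ≤ C := fun γ => by simpa [F, norm_smul, hχ.2] using hh γ
  have hterm : ∀ γ, starRingEnd ℂ (χ γ) • h (γ + d) = χ d • F (d + γ) := fun γ => by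
    rw [add_comm γ d, smul_smul, hχ.1, map_mul, ← mul_assoc, mul_comm (χ d), hχ.conj_mul,
      one_mul]
  have htranslate : (bohrMean H fun γ => starRingEnd ℂ (χ γ) • h (γ + d)) =
      fun n => χ d • bohrMean H (fun γ => F (d + γ)) n := by
    funext n
    rw [bohrMean, bohrMean, sum_congr rfl fun γ _ => hterm γ, ← smul_sum, smul_comm]
  rw [htranslate]
  simpa using ((tendsto_bohrMean_add_sub hH hF d).add hb).const_smul (χ d)

end BohrMean

section GainFramework

variable {Γ X Y V₀ E₀ : Type*} [AddCommGroup Γ] [NormedAddCommGroup X] [InnerProductSpace ℂ X]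

lemma linearPart_add (τ : Γ → (X ≃ᵃⁱ[ℂ] X))
    (hτ : ∀ γ γ' : Γ, ∀ x : X, τ (γ + γ') x = τ γ (τ γ' x)) (U : Γ → (X ≃ₗᵢ[ℂ] X)) (hU : ∀ γ x, U γ x = τ γ x - τ γ 0) (γ γ' : Γ) (x : X) :
    U (γ + γ') x = U γ (U γ' x) := by
  rw [hU γ' x, map_sub, hU γ (τ γ' x), hU γ (τ γ' 0), hU (γ + γ'), hτ, hτ]
  abel

variable [NormedAddCommGroup Y] (s r : E₀ → V₀) (m : E₀ → Γ) (U : Γ → (X ≃ₗᵢ[ℂ] X))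
  (hU : ∀ γ γ' : Γ, ∀ x : X, U (γ + γ') x = U γ (U γ' x))
include hU

lemma gainOp_twist [Module ℂ Y] (φ : E₀ → (X →ₗ[ℂ] Y)) (f : Γ → V₀ → X) (γ : Γ) (e : E₀) :
    gainOp s r m φ U (fun γ v => U γ (f γ v)) γ e =
      φ e (f γ (s e)) - φ e (U (m e) (f (γ + m e) (r e))) := by
  have hU0 : ∀ x, U 0 x = x := fun x => (U 0).injective (by rw [← hU, add_zero])
  rw [gainOp, map_sub, ← hU, ← hU, neg_add_cancel, neg_add_cancel_left, hU0, map_sub]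

lemma gainOp_twist_char_smul [Module ℂ Y] (φ : E₀ → (X →ₗ[ℂ] Y)) {χ : Γ → ℂ} (hχ : IsChar χ)
    (x : V₀ → X) (γ : Γ) (e : E₀) :
    gainOp s r m φ U (fun γ v => U γ (χ γ • x v)) γ e = χ γ • orbitMatrix s r m φ U χ x e := by
  refine (gainOp_twist s r m U hU φ _ γ e).trans ?_
  simp only [orbitMatrix, hχ.1, mul_smul, map_smul, smul_sub]

lemma orbitMatrix_eq_zero_of_tendsto_bohrMean [DecidableEq Γ] [FiniteDimensional ℂ X]
    [Fintype V₀] [NormedSpace ℂ Y] (φ : E₀ → (X →ₗ[ℂ] Y)) {H : ℕ → Finset Γ}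
    (hH : IsBohrBochner H) {h : Γ → V₀ → X} (hh : IsAP h)
    (hflex : ∀ γ e, gainOp s r m φ U (fun γ v => U γ (h γ v)) γ e = 0)
    {χ : Γ → ℂ} (hχ : IsChar χ) {b : V₀ → X}
    (hb : Tendsto (bohrMean H fun γ => starRingEnd ℂ (χ γ) • h γ) atTop (nhds b)) (e : E₀) :
    orbitMatrix s r m φ U χ b e = 0 := by
  obtain ⟨C, hC⟩ := hh.exists_norm_le
  let L₁ : (V₀ → X) →ₗ[ℂ] Y := (φ e).comp (LinearMap.proj (s e))
  let L₂ : (V₀ → X) →ₗ[ℂ] Y :=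
    ((φ e).comp (U (m e)).toLinearEquiv.toLinearMap).comp (LinearMap.proj (r e))
  have hL : ∀ γ, L₁ (h γ) = L₂ (h (γ + m e)) := fun γ =>
    sub_eq_zero.1 ((gainOp_twist s r m U hU φ h γ e).symm.trans (hflex γ e))
  have hmeans : ∀ n, L₁ (bohrMean H (fun γ => starRingEnd ℂ (χ γ) • h γ) n) =
      L₂ (bohrMean H (fun γ => starRingEnd ℂ (χ γ) • h (γ + m e)) n) := fun n => by
    simp only [map_bohrMean, map_smul, hL]
  have hlim₁ := (L₁.continuous_of_finiteDimensional.tendsto b).comp hb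
  have hlim₂ := (L₂.continuous_of_finiteDimensional.tendsto _).comp
    (tendsto_bohrMean_conj_smul_add hH hχ hC hb (m e))
  have hb_eq : L₁ b = L₂ (χ (m e) • b) := tendsto_nhds_unique (hlim₁.congr hmeans) hlim₂
  rw [orbitMatrix, sub_eq_zero]
  simpa [L₁, L₂] using hb_eq

end GainFramework

theorem RUMspectrum_eq_union_bohrFourier_general
    {Γ : Type*} [AddCommGroup Γ] [DecidableEq Γ]
    {X : Type*} [NormedAddCommGroup X] [InnerProductSpace ℂ X] [FiniteDimensional ℂ X]
    {Y : Type*} [NormedAddCommGroup Y] [InnerProductSpace ℂ Y]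
    {V₀ E₀ : Type*} [Fintype V₀]
    (s r : E₀ → V₀) (m : E₀ → Γ) (φ : E₀ → (X →ₗ[ℂ] Y))
    (τ : Γ → (X ≃ᵃⁱ[ℂ] X))
    (hτ : ∀ γ γ' : Γ, ∀ x : X, τ (γ + γ') x = τ γ (τ γ' x))
    (U : Γ → (X ≃ₗᵢ[ℂ] X)) (hU : ∀ γ x, U γ x = τ γ x - τ γ 0)
    (H : ℕ → Finset Γ) (hH : IsBohrBochner H) :
    ({χ : Γ → ℂ | IsChar χ ∧ ∃ x : V₀ → X, x ≠ 0 ∧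
        ∀ e, orbitMatrix s r m φ U χ x e = 0} =
      {χ : Γ → ℂ | IsChar χ ∧ ∃ h : Γ → V₀ → X, IsAP h ∧
        (∀ (γ : Γ) (e : E₀),
          gainOp s r m φ U (fun γ' v => U γ' (h γ' v)) γ e = 0) ∧
        ∃ b : V₀ → X, b ≠ 0 ∧
          Tendsto
            (fun n => (((H n).card : ℂ))⁻¹ • ∑ γ ∈ H n, (starRingEnd ℂ) (χ γ) • h γ)
            atTop (nhds b)}) ∧
      ∀ h : Γ → V₀ → X, IsAP h →
        (∀ (γ : Γ) (e : E₀),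
          gainOp s r m φ U (fun γ' v => U γ' (h γ' v)) γ e = 0) →
        ∀ (χ : Γ → ℂ) (b : V₀ → X), IsChar χ →
          Tendsto
            (fun n => (((H n).card : ℂ))⁻¹ • ∑ γ ∈ H n, (starRingEnd ℂ) (χ γ) • h γ)
            atTop (nhds b) →
          ∀ (γ : Γ) (e : E₀),
            gainOp s r m φ U (fun γ' v => U γ' (χ γ' • b v)) γ e = 0 := by
  have hUadd := linearPart_add τ hτ U hU
  refine ⟨Set.ext fun χ => ⟨?_, ?_⟩, fun h hh hflex χ b hχ hb γ e => ?_⟩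
  · rintro ⟨hχ, x, hx, hker⟩
    refine ⟨hχ, fun γ => χ γ • x, (isTrigPoly_char_smul hχ x).isAP, fun γ e => ?_, x, hx, ?_⟩
    · simp only [Pi.smul_apply, gainOp_twist_char_smul s r m U hUadd φ hχ, hker, smul_zero]
    · refine (tendsto_bohrMean_const hH x).congr fun n => ?_
      simp only [bohrMean, smul_smul, hχ.conj_mul, one_smul]
  · rintro ⟨hχ, h, hh, hflex, b, hb, hlim⟩
    exact ⟨hχ, b, hb, orbitMatrix_eq_zero_of_tendsto_bohrMean s r m U hUadd φ hH hh hflex hχ hlim⟩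
  · rw [gainOp_twist_char_smul s r m U hUadd φ hχ,
      orbitMatrix_eq_zero_of_tendsto_bohrMean s r m U hUadd φ hH hh hflex hχ hb, smul_zero]

/-- the RUM spectrum `Ω(𝒢₀)` equals the union of the Bohr–Fourier
spectra `Λ(T_τ̃⁻¹ g)` over all twisted almost periodic flexes `g = T_τ̃ h` of `𝒢₀`;
moreover for every twisted almost periodic flex `T_τ̃ h` and every character `χ`,
the `χ`-symmetric vector `z(χ, ĥ(χ)) = T_τ̃ (χ ⊗ ĥ(χ))` is a bounded infinitesimal
flex of `𝒢₀`. -/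
theorem RUMspectrum_eq_union_bohrFourier
    {Γ : Type*} [AddCommGroup Γ] [AddGroup.FG Γ] [Countable Γ] [DecidableEq Γ]
    {X : Type*} [NormedAddCommGroup X] [InnerProductSpace ℂ X] [FiniteDimensional ℂ X]
    {Y : Type*} [NormedAddCommGroup Y] [InnerProductSpace ℂ Y] [FiniteDimensional ℂ Y]
    {V₀ E₀ : Type*} [Fintype V₀] [Fintype E₀]
    (s r : E₀ → V₀) (m : E₀ → Γ) (φ : E₀ → (X →ₗ[ℂ] Y))
    (τ : Γ → (X ≃ᵃⁱ[ℂ] X))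
    (hτ : ∀ γ γ' : Γ, ∀ x : X, τ (γ + γ') x = τ γ (τ γ' x))
    (U : Γ → (X ≃ₗᵢ[ℂ] X)) (hU : ∀ γ x, U γ x = τ γ x - τ γ 0)
    (H : ℕ → Finset Γ) (hH : IsBohrBochner H) :
    ({χ : Γ → ℂ | IsChar χ ∧ ∃ x : V₀ → X, x ≠ 0 ∧
        ∀ e, orbitMatrix s r m φ U χ x e = 0} =
      {χ : Γ → ℂ | IsChar χ ∧ ∃ h : Γ → V₀ → X, IsAP h ∧
        (∀ (γ : Γ) (e : E₀),
          gainOp s r m φ U (fun γ' v => U γ' (h γ' v)) γ e = 0) ∧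
        ∃ b : V₀ → X, b ≠ 0 ∧
          Tendsto
            (fun n => (((H n).card : ℂ))⁻¹ • ∑ γ ∈ H n, (starRingEnd ℂ) (χ γ) • h γ)
            atTop (nhds b)}) ∧
      ∀ h : Γ → V₀ → X, IsAP h →
        (∀ (γ : Γ) (e : E₀),
          gainOp s r m φ U (fun γ' v => U γ' (h γ' v)) γ e = 0) →
        ∀ (χ : Γ → ℂ) (b : V₀ → X), IsChar χ →
          Tendsto
            (fun n => (((H n).card : ℂ))⁻¹ • ∑ γ ∈ H n, (starRingEnd ℂ) (χ γ) • h γ)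
            atTop (nhds b) →
          ∀ (γ : Γ) (e : E₀),
            gainOp s r m φ U (fun γ' v => U γ' (χ γ' • b v)) γ e = 0 :=
  RUMspectrum_eq_union_bohrFourier_general s r m φ τ hτ U hU H hH
end
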